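/- Soundness of the translation for !_{t}^{c,w}MacLL: for any set X of formulas, if MacLL extended with nonlogical axioms Φ^X_∞ (and cut) derives τ(Γ) ⇒ τ(C), and every propositional variable occurring in the derivation occurs in the endsequent, then !_{t}^{c,w}MacLL (with cut) derives Γ ⇒ C. -/

import Mathlib

/-- Multiplicative exponential formulas: variables, unit, !, ⊗, →, ←. -/
inductive Fm : Type where
  | var : Nat → Fm
  | one : Fm
  | bang : Fm → Fm
  | tens : Fm → Fm → Fm
  | arr : Fm → Fm → Fm      -- A → B
  | larr : Fm → Fm → Fm     -- B ← A
deriving DecidableEq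

/-- Structures: binary trees of formulas, allowing the empty structure. -/
inductive Str : Type where
  | emp : Str
  | leaf : Fm → Str
  | comma : Str → Str → Str
deriving DecidableEq

/-- One-hole structure contexts. -/
inductive Ctx : Type where
  | hole : Ctx
  | commaL : Ctx → Str → Ctx
  | commaR : Str → Ctx → Ctx

/-- Plug a structure into the hole of a context. -/
def Ctx.fill : Ctx → Str → Str
  | .hole, Δ => Δ
  | .commaL c Δ, P => .comma (c.fill P) Δ
  | .commaR Γ c, P => .comma Γ (c.fill P)

/-- !Γ : bang every leaf formula of a structure. -/
def bangStr : Str → Str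
  | .emp => .emp
  | .leaf A => .leaf (.bang A)
  | .comma a b => .comma (bangStr a) (bangStr b)

/-- `StarBang Γ Γ'` : Γ' is Γ with some subset of its leaf formulas banged (!*Γ). -/
inductive StarBang : Str → Str → Prop where
  | emp : StarBang .emp .emp
  | leaf (A : Fm) : StarBang (.leaf A) (.leaf A)
  | leafBang (A : Fm) : StarBang (.leaf A) (.leaf (.bang A))
  | comma {a a' b b' : Str} : StarBang a a' → StarBang b b' →
      StarBang (.comma a b) (.comma a' b')

/-- Proper structures: nonempty binary trees of formulas (no occurrence of the
empty structure), matching the grammar Γ ::= (Γ,Γ) | F. -/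
inductive Str.proper : Str → Prop where
  | leaf (A : Fm) : (Str.leaf A).proper
  | comma {a b : Str} : a.proper → b.proper → (Str.comma a b).proper

/-- Flags selecting the optional modal/structural rules of a system. -/
structure Flags where
  bangL : Bool := false
  bangR : Bool := false
  bangRK : Bool := false
  bangR4 : Bool := false
  bangRK4 : Bool := false
  contr : Bool := false     -- single-formula contraction C
  contrK : Bool := false    -- structural contraction CK
  weak : Bool := false      -- weakening W
  cut : Bool := false

/-- Sequent derivability in MacLL extended by the rules selected by `fl`,
with nonlogical axioms `Ax`. -/
inductive Der (fl : Flags) (Ax : Set (Str × Fm)) : Str → Fm → Prop where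
  | ax {Γ : Str} {C : Fm} : (Γ, C) ∈ Ax → Der fl Ax Γ C
  | init (A : Fm) : Der fl Ax (.leaf A) A
  | tensL (Γ : Ctx) {A B C : Fm} :
      Der fl Ax (Γ.fill (.comma (.leaf A) (.leaf B))) C →
      Der fl Ax (Γ.fill (.leaf (.tens A B))) C
  | tensR {Γ Δ : Str} {A B : Fm} :
      Der fl Ax Γ A → Der fl Ax Δ B → Der fl Ax (.comma Γ Δ) (.tens A B)
  | arrL (Γ : Ctx) {Δ : Str} {A B C : Fm} :
      Der fl Ax Δ A → Der fl Ax (Γ.fill (.leaf B)) C →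
      Der fl Ax (Γ.fill (.comma Δ (.leaf (.arr A B)))) C
  | arrR {Γ : Str} {A B : Fm} :
      Der fl Ax (.comma (.leaf A) Γ) B → Der fl Ax Γ (.arr A B)
  | larrL (Γ : Ctx) {Δ : Str} {A B C : Fm} :
      Der fl Ax Δ A → Der fl Ax (Γ.fill (.leaf B)) C →
      Der fl Ax (Γ.fill (.comma (.leaf (.larr B A)) Δ)) C
  | larrR {Γ : Str} {A B : Fm} :
      Der fl Ax (.comma Γ (.leaf A)) B → Der fl Ax Γ (.larr B A)
  | oneL (Γ : Ctx) {C : Fm} :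
      Der fl Ax (Γ.fill .emp) C → Der fl Ax (Γ.fill (.leaf .one)) C
  | oneR : Der fl Ax .emp .one
  | bangL (Γ : Ctx) {A C : Fm} : fl.bangL = true →
      Der fl Ax (Γ.fill (.leaf A)) C → Der fl Ax (Γ.fill (.leaf (.bang A))) C
  | bangR {A C : Fm} : fl.bangR = true →
      Der fl Ax (.leaf A) C → Der fl Ax (.leaf (.bang A)) (.bang C)
  | bangRK {Γ : Str} {C : Fm} : fl.bangRK = true →
      Der fl Ax Γ C → Der fl Ax (bangStr Γ) (.bang C)
  | bangR4 {A C : Fm} : fl.bangR4 = true →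
      Der fl Ax (.leaf (.bang A)) C → Der fl Ax (.leaf (.bang A)) (.bang C)
  | bangRK4 {Γ Γ' : Str} {C : Fm} : fl.bangRK4 = true →
      StarBang Γ Γ' → Der fl Ax Γ' C → Der fl Ax (bangStr Γ) (.bang C)
  | contr (Γ : Ctx) {A : Fm} {C : Fm} : fl.contr = true →
      Der fl Ax (Γ.fill (.comma (.leaf (.bang A)) (.leaf (.bang A)))) C →
      Der fl Ax (Γ.fill (.leaf (.bang A))) C
  | contrK (Γ : Ctx) {Δ : Str} {C : Fm} : fl.contrK = true → Δ.proper →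
      Der fl Ax (Γ.fill (.comma (bangStr Δ) (bangStr Δ))) C →
      Der fl Ax (Γ.fill (bangStr Δ)) C
  | weak (Γ : Ctx) {A C : Fm} : fl.weak = true →
      Der fl Ax (Γ.fill .emp) C → Der fl Ax (Γ.fill (.leaf (.bang A))) C
  | cut (Γ : Ctx) {Δ : Str} {A C : Fm} : fl.cut = true →
      Der fl Ax Δ A → Der fl Ax (Γ.fill (.leaf A)) C →
      Der fl Ax (Γ.fill Δ) C

/-- Plain MacLL (no modal or structural rules, no cut). -/
def macll : Flags := {}
/-- Translation τ into !-free formulas: τ(p_i)=p_{2i+1}, τ(!A)=p_{2⌈A⌉}. -/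
def tau (enc : Fm → Nat) : Fm → Fm
  | .var i => .var (2 * i + 1)
  | .one => .one
  | .bang A => .var (2 * enc A)
  | .tens A B => .tens (tau enc A) (tau enc B)
  | .arr A B => .arr (tau enc A) (tau enc B)
  | .larr A B => .larr (tau enc A) (tau enc B)

/-- Leafwise extension of τ to structures. -/
def tauStr (enc : Fm → Nat) : Str → Str
  | .emp => .emp
  | .leaf A => .leaf (tau enc A)
  | .comma a b => .comma (tauStr enc a) (tauStr enc b)

/-- The set of propositional variables of a formula. -/
def Fm.vars : Fm → Set Nat
  | .var i => {i}
  | .one => ∅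
  | .bang A => A.vars
  | .tens A B => A.vars ∪ B.vars
  | .arr A B => A.vars ∪ B.vars
  | .larr A B => A.vars ∪ B.vars

def Str.vars : Str → Set Nat
  | .emp => ∅
  | .leaf A => A.vars
  | .comma a b => a.vars ∪ b.vars

/-- Subformulas of a formula. -/
def Fm.sub : Fm → Set Fm
  | .var i => {.var i}
  | .one => {.one}
  | .bang A => insert (.bang A) A.sub
  | .tens A B => insert (.tens A B) (A.sub ∪ B.sub)
  | .arr A B => insert (.arr A B) (A.sub ∪ B.sub)
  | .larr A B => insert (.larr A B) (A.sub ∪ B.sub)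

/-- The yield of a structure: the set of formulas occurring in it. -/
def Str.fms : Str → Set Fm
  | .emp => ∅
  | .leaf A => {A}
  | .comma a b => a.fms ∪ b.fms

/-- !-free formulas. -/
def Fm.bangFree : Fm → Prop
  | .var _ => True
  | .one => True
  | .bang _ => False
  | .tens A B => A.bangFree ∧ B.bangFree
  | .arr A B => A.bangFree ∧ B.bangFree
  | .larr A B => A.bangFree ∧ B.bangFree

def Str.bangFree : Str → Prop
  | .emp => True
  | .leaf A => A.bangFree
  | .comma a b => a.bangFree ∧ b.bangFree

/-- The flags of the cut-free system !^S_M MacLL, for S ⊆ {c,w} and M ⊆ {k,t,4}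
given by Booleans c, w, k, t, f4. -/
def sysFlags (c w k t f4 : Bool) : Flags where
  bangL := t
  bangR := !k && !f4
  bangRK := k && !f4
  bangR4 := !k && f4
  bangRK4 := k && f4
  contr := c && !k
  contrK := c && k
  weak := w
  cut := false

/-- MacLL with cut (used with nonlogical axioms). -/
def macllCut : Flags := { cut := true }
/-- The axiom sets Φ^X_n (for the light system without axiom 4): Φ^X_0 contains
p_{2⌈A⌉} ⇒ τ(A), p_{2⌈A⌉} ⇒ p_{2⌈A⌉} ⊗ p_{2⌈A⌉} and p_{2⌈A⌉} ⇒ 1 for !A ∈ X;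
Φ^X_{n+1} adds p_{2⌈A⌉} ⇒ p_{2⌈B⌉} whenever MacLL+Φ^X_n proves τ(A) ⇒ τ(B). -/
def Phi (enc : Fm → Nat) (X : Set Fm) : Nat → Set (Str × Fm)
  | 0 => {s | ∃ A, Fm.bang A ∈ X ∧
      (s = (Str.leaf (Fm.var (2 * enc A)), tau enc A) ∨
       s = (Str.leaf (Fm.var (2 * enc A)),
            Fm.tens (Fm.var (2 * enc A)) (Fm.var (2 * enc A))) ∨
       s = (Str.leaf (Fm.var (2 * enc A)), Fm.one))}
  | n + 1 => Phi enc X n ∪ {s | ∃ A B, Fm.bang A ∈ X ∧ Fm.bang B ∈ X ∧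
      s = (Str.leaf (Fm.var (2 * enc A)), Fm.var (2 * enc B)) ∧
      Der macllCut (Phi enc X n) (Str.leaf (tau enc A)) (tau enc B)}
/-- Derivability where every sequent occurring in the derivation (as the
conclusion of some rule) satisfies the predicate `good`. -/
inductive DerG (fl : Flags) (Ax : Set (Str × Fm)) (good : Str → Fm → Prop) :
    Str → Fm → Prop where
  | ax {Γ : Str} {C : Fm} : (Γ, C) ∈ Ax → good Γ C → DerG fl Ax good Γ C
  | init (A : Fm) : good (.leaf A) A → DerG fl Ax good (.leaf A) A
  | tensL (Γ : Ctx) {A B C : Fm} :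
      good (Γ.fill (.leaf (.tens A B))) C →
      DerG fl Ax good (Γ.fill (.comma (.leaf A) (.leaf B))) C →
      DerG fl Ax good (Γ.fill (.leaf (.tens A B))) C
  | tensR {Γ Δ : Str} {A B : Fm} : good (.comma Γ Δ) (.tens A B) →
      DerG fl Ax good Γ A → DerG fl Ax good Δ B →
      DerG fl Ax good (.comma Γ Δ) (.tens A B)
  | arrL (Γ : Ctx) {Δ : Str} {A B C : Fm} :
      good (Γ.fill (.comma Δ (.leaf (.arr A B)))) C →
      DerG fl Ax good Δ A → DerG fl Ax good (Γ.fill (.leaf B)) C →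
      DerG fl Ax good (Γ.fill (.comma Δ (.leaf (.arr A B)))) C
  | arrR {Γ : Str} {A B : Fm} : good Γ (.arr A B) →
      DerG fl Ax good (.comma (.leaf A) Γ) B → DerG fl Ax good Γ (.arr A B)
  | larrL (Γ : Ctx) {Δ : Str} {A B C : Fm} :
      good (Γ.fill (.comma (.leaf (.larr B A)) Δ)) C →
      DerG fl Ax good Δ A → DerG fl Ax good (Γ.fill (.leaf B)) C →
      DerG fl Ax good (Γ.fill (.comma (.leaf (.larr B A)) Δ)) C
  | larrR {Γ : Str} {A B : Fm} : good Γ (.larr B A) →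
      DerG fl Ax good (.comma Γ (.leaf A)) B → DerG fl Ax good Γ (.larr B A)
  | oneL (Γ : Ctx) {C : Fm} : good (Γ.fill (.leaf .one)) C →
      DerG fl Ax good (Γ.fill .emp) C → DerG fl Ax good (Γ.fill (.leaf .one)) C
  | oneR : good .emp .one → DerG fl Ax good .emp .one
  | bangL (Γ : Ctx) {A C : Fm} : fl.bangL = true →
      good (Γ.fill (.leaf (.bang A))) C →
      DerG fl Ax good (Γ.fill (.leaf A)) C →
      DerG fl Ax good (Γ.fill (.leaf (.bang A))) C
  | bangR {A C : Fm} : fl.bangR = true → good (.leaf (.bang A)) (.bang C) →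
      DerG fl Ax good (.leaf A) C → DerG fl Ax good (.leaf (.bang A)) (.bang C)
  | bangRK {Γ : Str} {C : Fm} : fl.bangRK = true → good (bangStr Γ) (.bang C) →
      DerG fl Ax good Γ C → DerG fl Ax good (bangStr Γ) (.bang C)
  | bangR4 {A C : Fm} : fl.bangR4 = true → good (.leaf (.bang A)) (.bang C) →
      DerG fl Ax good (.leaf (.bang A)) C →
      DerG fl Ax good (.leaf (.bang A)) (.bang C)
  | bangRK4 {Γ Γ' : Str} {C : Fm} : fl.bangRK4 = true →
      good (bangStr Γ) (.bang C) → StarBang Γ Γ' → DerG fl Ax good Γ' C →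
      DerG fl Ax good (bangStr Γ) (.bang C)
  | contr (Γ : Ctx) {A : Fm} {C : Fm} : fl.contr = true →
      good (Γ.fill (.leaf (.bang A))) C →
      DerG fl Ax good (Γ.fill (.comma (.leaf (.bang A)) (.leaf (.bang A)))) C →
      DerG fl Ax good (Γ.fill (.leaf (.bang A))) C
  | contrK (Γ : Ctx) {Δ : Str} {C : Fm} : fl.contrK = true → Δ.proper →
      good (Γ.fill (bangStr Δ)) C →
      DerG fl Ax good (Γ.fill (.comma (bangStr Δ) (bangStr Δ))) C →
      DerG fl Ax good (Γ.fill (bangStr Δ)) C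
  | weak (Γ : Ctx) {A C : Fm} : fl.weak = true →
      good (Γ.fill (.leaf (.bang A))) C →
      DerG fl Ax good (Γ.fill .emp) C →
      DerG fl Ax good (Γ.fill (.leaf (.bang A))) C
  | cut (Γ : Ctx) {Δ : Str} {A C : Fm} : fl.cut = true → good (Γ.fill Δ) C →
      DerG fl Ax good Δ A → DerG fl Ax good (Γ.fill (.leaf A)) C →
      DerG fl Ax good (Γ.fill Δ) C

/-- !_{t}^{c,w}MacLL with cut. -/
def sys11 : Flags :=
  { bangL := true, bangR := true, contr := true, weak := true, cut := true }

/-! The translation τ has a left inverse σ that is a substitution: σ sends p_{2i+1} to p_i and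
p_{2⌈A⌉} to !A. Applying σ to a derivation in MacLL + Φ^X_∞ + cut of τ(Γ) ⇒ τ(C) yields a
derivation of Γ ⇒ C, because σ maps every MacLL rule and cut to an instance of the same rule and
every axiom of Φ^X_n to a sequent derivable in !_{t}^{c,w}MacLL: !A ⇒ A by !L, !A ⇒ !A ⊗ !A by C,
!A ⇒ 1 by W, and !A ⇒ !B by !R applied to the σ-image of the MacLL + Φ^X_n derivation of
τ(A) ⇒ τ(B) (induction on n). -/

def Fm.subst (s : Nat → Fm) : Fm → Fm
  | .var n => s n
  | .one => .one
  | .bang A => .bang (A.subst s)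
  | .tens A B => .tens (A.subst s) (B.subst s)
  | .arr A B => .arr (A.subst s) (B.subst s)
  | .larr A B => .larr (A.subst s) (B.subst s)

def Str.subst (s : Nat → Fm) : Str → Str
  | .emp => .emp
  | .leaf A => .leaf (A.subst s)
  | .comma a b => .comma (a.subst s) (b.subst s)

def Ctx.subst (s : Nat → Fm) : Ctx → Ctx
  | .hole => .hole
  | .commaL c Δ => .commaL (c.subst s) (Δ.subst s)
  | .commaR Γ c => .commaR (Γ.subst s) (c.subst s)

@[simp]
theorem Str.subst_fill (s : Nat → Fm) (c : Ctx) (Δ : Str) :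
    (c.fill Δ).subst s = (c.subst s).fill (Δ.subst s) := by
  induction c with
  | hole => rfl
  | commaL c Δ' ih => simp [Ctx.fill, Str.subst, Ctx.subst, ih]
  | commaR Γ c ih => simp [Ctx.fill, Str.subst, Ctx.subst, ih]

theorem DerG.toDer {fl : Flags} {Ax : Set (Str × Fm)} {good : Str → Fm → Prop}
    {Γ : Str} {C : Fm} (h : DerG fl Ax good Γ C) : Der fl Ax Γ C := by
  induction h with
  | ax h _ => exact .ax h
  | init A _ => exact .init A
  | tensL Γ _ _ ih => exact .tensL Γ ih
  | tensR _ _ _ ih₁ ih₂ => exact .tensR ih₁ ih₂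
  | arrL Γ _ _ _ ih₁ ih₂ => exact .arrL Γ ih₁ ih₂
  | arrR _ _ ih => exact .arrR ih
  | larrL Γ _ _ _ ih₁ ih₂ => exact .larrL Γ ih₁ ih₂
  | larrR _ _ ih => exact .larrR ih
  | oneL Γ _ _ ih => exact .oneL Γ ih
  | oneR _ => exact .oneR
  | bangL Γ hf _ _ ih => exact .bangL Γ hf ih
  | bangR hf _ _ ih => exact .bangR hf ih
  | bangRK hf _ _ ih => exact .bangRK hf ih
  | bangR4 hf _ _ ih => exact .bangR4 hf ih
  | bangRK4 hf _ hsb _ ih => exact .bangRK4 hf hsb ih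
  | contr Γ hf _ _ ih => exact .contr Γ hf ih
  | contrK Γ hf hp _ _ ih => exact .contrK Γ hf hp ih
  | weak Γ hf _ _ ih => exact .weak Γ hf ih
  | cut Γ hf _ _ _ ih₁ ih₂ => exact .cut Γ hf ih₁ ih₂

theorem Der.subst {fl : Flags} (hcut : fl.cut = true) {Ax Ax' : Set (Str × Fm)} (s : Nat → Fm)
    (hax : ∀ Γ C, (Γ, C) ∈ Ax → Der fl Ax' (Γ.subst s) (C.subst s))
    {Γ : Str} {C : Fm} (h : Der macllCut Ax Γ C) : Der fl Ax' (Γ.subst s) (C.subst s) := by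
  induction h with
  | ax h => exact hax _ _ h
  | init A => exact .init _
  | tensL Γ _ ih =>
    simp only [Str.subst_fill, Str.subst, Fm.subst] at ih ⊢
    exact .tensL _ ih
  | tensR _ _ ih₁ ih₂ => exact .tensR ih₁ ih₂
  | arrL Γ _ _ ih₁ ih₂ =>
    simp only [Str.subst_fill, Str.subst, Fm.subst] at ih₂ ⊢
    exact .arrL _ ih₁ ih₂
  | arrR _ ih => exact .arrR ih
  | larrL Γ _ _ ih₁ ih₂ =>
    simp only [Str.subst_fill, Str.subst, Fm.subst] at ih₂ ⊢
    exact .larrL _ ih₁ ih₂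
  | larrR _ ih => exact .larrR ih
  | oneL Γ _ ih =>
    simp only [Str.subst_fill, Str.subst, Fm.subst] at ih ⊢
    exact .oneL _ ih
  | oneR => exact .oneR
  | cut Γ _ _ _ ih₁ ih₂ =>
    simp only [Str.subst_fill, Str.subst] at ih₂ ⊢
    exact .cut _ hcut ih₁ ih₂
  | bangL _ hf | bangR hf | bangRK hf | bangR4 hf | bangRK4 hf | contr _ hf | contrK _ hf
  | weak _ hf => exact absurd hf Bool.false_ne_true

instance : Nonempty Fm := ⟨.one⟩

/-- σ. Even indices outside `2 * range enc` are sent to junk values. -/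
noncomputable def tauInvVar (enc : Fm → Nat) (n : Nat) : Fm :=
  if n % 2 = 1 then .var (n / 2) else .bang (Function.invFun enc (n / 2))

theorem tauInvVar_odd (enc : Fm → Nat) (i : Nat) : tauInvVar enc (2 * i + 1) = .var i := by
  simp only [tauInvVar, if_pos (by omega : (2 * i + 1) % 2 = 1)]
  congr 1
  omega

theorem tauInvVar_two_mul_enc {enc : Fm → Nat} (henc : Function.Injective enc) (A : Fm) :
    tauInvVar enc (2 * enc A) = .bang A := by
  simp only [tauInvVar, if_neg (by omega : ¬ (2 * enc A) % 2 = 1),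
    Nat.mul_div_cancel_left _ two_pos, Function.leftInverse_invFun henc A]

theorem subst_tauInvVar_tau {enc : Fm → Nat} (henc : Function.Injective enc) (A : Fm) :
    (tau enc A).subst (tauInvVar enc) = A := by
  induction A with
  | var i => exact tauInvVar_odd enc i
  | one => rfl
  | bang A => exact tauInvVar_two_mul_enc henc A
  | tens A B ihA ihB => simp only [tau, Fm.subst, ihA, ihB]
  | arr A B ihA ihB => simp only [tau, Fm.subst, ihA, ihB]
  | larr A B ihA ihB => simp only [tau, Fm.subst, ihA, ihB]

theorem subst_tauInvVar_tauStr {enc : Fm → Nat} (henc : Function.Injective enc) (Γ : Str) :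
    (tauStr enc Γ).subst (tauInvVar enc) = Γ := by
  induction Γ with
  | emp => rfl
  | leaf A => simp only [tauStr, Str.subst, subst_tauInvVar_tau henc]
  | comma a b iha ihb => simp only [tauStr, Str.subst, iha, ihb]

theorem der_sys11_subst_tauInvVar_of_mem_Phi {enc : Fm → Nat} (henc : Function.Injective enc)
    (X : Set Fm) (n : Nat) {Γ : Str} {C : Fm} (hmem : (Γ, C) ∈ Phi enc X n) :
    Der sys11 ∅ (Γ.subst (tauInvVar enc)) (C.subst (tauInvVar enc)) := by
  induction n generalizing Γ C with
  | zero =>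
    obtain ⟨A, -, hs | hs | hs⟩ := hmem <;> obtain ⟨rfl, rfl⟩ := Prod.ext_iff.mp hs <;>
      simp only [Str.subst, Fm.subst, tauInvVar_two_mul_enc henc, subst_tauInvVar_tau henc]
    · exact .bangL .hole rfl (.init A)
    · exact .contr .hole rfl (.tensR (.init _) (.init _))
    · exact .weak .hole rfl .oneR
  | succ n ih =>
    obtain hmem | ⟨A, B, -, -, hs, hder⟩ := hmem
    · exact ih hmem
    obtain ⟨rfl, rfl⟩ := Prod.ext_iff.mp hs
    have hAB := Der.subst rfl (tauInvVar enc) (fun _ _ h ↦ ih h) hder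
    simp only [Str.subst, Fm.subst, tauInvVar_two_mul_enc henc,
      subst_tauInvVar_tau henc] at hAB ⊢
    exact .bangR rfl hAB

/-- Soundness of the translation: if MacLL + Φ^X_∞ + cut derives τ(Γ) ⇒ τ(C)
by a derivation all of whose propositional variables occur in the endsequent,
then !_{t}^{c,w}MacLL (with cut) derives Γ ⇒ C. -/
theorem stmt11 (enc : Fm → Nat) (henc : Function.Injective enc)
    (X : Set Fm) (Γ : Str) (C : Fm)
    (h : DerG macllCut (⋃ n, Phi enc X n)
      (fun Δ D => Δ.vars ∪ D.vars ⊆ (tauStr enc Γ).vars ∪ (tau enc C).vars)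
      (tauStr enc Γ) (tau enc C)) :
    Der sys11 ∅ Γ C := by
  have hax : ∀ Δ D, (Δ, D) ∈ ⋃ n, Phi enc X n →
      Der sys11 ∅ (Δ.subst (tauInvVar enc)) (D.subst (tauInvVar enc)) := fun _ _ hmem ↦
    let ⟨n, hn⟩ := Set.mem_iUnion.mp hmem
    der_sys11_subst_tauInvVar_of_mem_Phi henc X n hn
  have hder := Der.subst rfl (tauInvVar enc) hax h.toDer
  rwa [subst_tauInvVar_tauStr henc, subst_tauInvVar_tau henc] at hder
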